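/- Let t be a natural number and let W_t = S_t ⋉ {±1}^t with the subgroup S_t of permutations (no sign changes). Then the induced representation Ind_{S_t}^{W_t} sgn (where sgn is the sign character of S_t) decomposes multiplicity-freely as the direct sum over pairs (s,r) with s + r = t of the irreducible W_t-representations labeled by the bipartition ([s]_col, [r]_col), i.e., the pair consisting of the single-column partition of size s and the single-column partition of size r. -/

import Mathlib

open scoped Classical

/-- The permutation action of `Equiv.Perm (Fin t)` on sign vectors. -/
def permAut (n : ℕ) : Equiv.Perm (Fin n) →* MulAut (Fin n → ℤˣ) where
  toFun s :=
    { toFun := fun x => x ∘ s.symm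
      invFun := fun x => x ∘ s
      left_inv := by intro x; funext i; simp
      right_inv := by intro x; funext i; simp
      map_mul' := by intro x y; rfl }
  map_one' := by ext x i; rfl
  map_mul' := by intro s t; ext x i; rfl

/-- The hyperoctahedral group `W_t = S_t ⋉ {±1}^t`. -/
abbrev HyperW (n : ℕ) : Type := (Fin n → ℤˣ) ⋊[permAut n] Equiv.Perm (Fin n)

noncomputable instance instFintypeHyperW (n : ℕ) : Fintype (HyperW n) :=
  Fintype.ofEquiv ((Fin n → ℤˣ) × Equiv.Perm (Fin n))
    { toFun := fun p => ⟨p.1, p.2⟩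
      invFun := fun w => (w.left, w.right)
      left_inv := fun _ => rfl
      right_inv := fun _ => rfl }

/-- The induced character `Ind_K^G η`, for a subgroup of `G` presented as the
image of an (injective) homomorphism `Φ : K →* G` and a character `η` of `K`. -/
noncomputable def inducedCharOf {K G : Type*} [Group K] [Fintype K] [Group G] [Fintype G]
    (Φ : K →* G) (η : K → ℂ) : G → ℂ :=
  fun g => (Fintype.card K : ℂ)⁻¹ * ∑ x : G, ∑ k : K, if x⁻¹ * g * x = Φ k then η k else 0

/-- A function `G → ℂ` is an irreducible character if it is the character of
some irreducible (simple) finite-dimensional complex representation of `G`. -/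
def IsIrredChar (G : Type) [Group G] (χ : G → ℂ) : Prop :=
  ∃ V : FDRep ℂ G, CategoryTheory.Simple V ∧ χ = FDRep.character V

/-!
For `s ≤ t` let `V_s` be the space of functions on the `s`-element subsets of `Fin t`, on which
`(z, π) ∈ W_t` acts monomially: `e_A ↦ sign π · ∏_{i ∈ A} z (π i) · e_{π A}`. Up to the convention
for which factor carries the sign character of `{±1}`, this is the representation labelled by
`([s]_col, [t - s]_col)`.

Restricted to `{±1}^t`, `V_s` is the sum of the pairwise distinct characters
`z ↦ ∏_{i ∈ A} z i` with `|A| = s`. Averaging against them shows that a nonzero invariant subspace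
contains some `e_A`, and `S_t` moves `e_A` to every `e_B`, so `V_s` is irreducible; the same
restriction tells the characters of different `V_s` apart. On the other side, the formula for
induced characters reduces `Ind sgn (z, π)` to `sign π` times the number of sign vectors `y` with
`z = y · (y ∘ π⁻¹)`, and expanding that count over the characters of `{±1}^t` gives
`∑_{π A = A} sign π ∏_{i ∈ A} z i`, which is `∑_s χ_{V_s} (z, π)`.
-/

open Finset
open scoped Pointwise

def signChar {ι : Type*} (A : Finset ι) (z : ι → ℤˣ) : ℂ := ∏ i ∈ A, ((z i : ℤ) : ℂ)

lemma signChar_mul {ι : Type*} (A : Finset ι) (z w : ι → ℤˣ) :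
    signChar A (z * w) = signChar A z * signChar A w := by
  simp [signChar, prod_mul_distrib]

lemma signChar_ne_zero {ι : Type*} (A : Finset ι) (z : ι → ℤˣ) : signChar A z ≠ 0 :=
  prod_ne_zero_iff.2 fun i _ => by rcases Int.units_eq_one_or (z i) with h | h <;> simp [h]

section SignCharacters

variable {ι : Type*} [DecidableEq ι]

lemma signChar_perm_smul (π : Equiv.Perm ι) (A : Finset ι) (z : ι → ℤˣ) :
    signChar (π • A) z = ∏ i ∈ A, ((z (π i) : ℤ) : ℂ) := by
  rw [signChar, smul_finset_def, prod_image fun i _ j _ h => MulAction.injective π h]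
  rfl

variable [Fintype ι]

lemma signChar_eq_prod_univ (A : Finset ι) (z : ι → ℤˣ) :
    signChar A z = ∏ i, if i ∈ A then ((z i : ℤ) : ℂ) else 1 := by
  rw [signChar, prod_ite_mem, univ_inter]

lemma sum_units_ite_mul_ite (p q : Prop) [Decidable p] [Decidable q] :
    ∑ b : ℤˣ, (if p then ((b : ℤ) : ℂ) else 1) * (if q then ((b : ℤ) : ℂ) else 1) =
      if (p ↔ q) then 2 else 0 := by
  rw [show (univ : Finset ℤˣ) = {1, -1} from rfl, sum_pair (by decide)]
  by_cases hp : p <;> by_cases hq : q <;> simp [hp, hq] <;> norm_num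

theorem sum_signChar_mul_signChar (A B : Finset ι) :
    ∑ z : ι → ℤˣ, signChar A z * signChar B z = if A = B then 2 ^ Fintype.card ι else 0 := by
  simp_rw [signChar_eq_prod_univ, ← prod_mul_distrib]
  rw [← Fintype.prod_sum fun i (b : ℤˣ) =>
      (if i ∈ A then ((b : ℤ) : ℂ) else 1) * (if i ∈ B then ((b : ℤ) : ℂ) else 1),
    Fintype.prod_congr _ _ fun i => sum_units_ite_mul_ite _ _,
    Fintype.prod_ite_zero, prod_const, card_univ]
  exact if_congr Finset.ext_iff.symm rfl rfl

lemma ite_two_zero_eq_one_add_mul (u v : ℤˣ) :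
    (if u = v then 2 else 0 : ℂ) = 1 + ((u : ℤ) : ℂ) * ((v : ℤ) : ℂ) := by
  rcases Int.units_eq_one_or u with rfl | rfl <;> rcases Int.units_eq_one_or v with rfl | rfl <;>
    norm_num

/-- Each factor `1 + a i * z i * z (π⁻¹ i)` is `2` or `0`; expanding their product and summing
over `z` with `sum_signChar_mul_signChar` leaves exactly the `π`-invariant subsets. -/
theorem card_solutions_mul_comp_perm (a : ι → ℤˣ) (π : Equiv.Perm ι) :
    (#{z : ι → ℤˣ | ∀ i, a i = z i * z (π⁻¹ i)} : ℂ) =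
      ∑ A : Finset ι, if π • A = A then signChar A a else 0 := by
  refine mul_left_cancel₀ (pow_ne_zero (Fintype.card ι) (two_ne_zero (α := ℂ))) ?_
  calc (2 : ℂ) ^ Fintype.card ι * #{z : ι → ℤˣ | ∀ i, a i = z i * z (π⁻¹ i)}
      = ∑ z : ι → ℤˣ, ∏ i, (1 + ((a i : ℤ) : ℂ) * (((z i : ℤ) : ℂ) * ((z (π⁻¹ i) : ℤ) : ℂ))) := by
        rw [natCast_card_filter, mul_sum]
        refine sum_congr rfl fun z _ => ?_
        have h := fun i => ite_two_zero_eq_one_add_mul (a i) (z i * z (π⁻¹ i))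
        push_cast at h
        simp_rw [← h, Fintype.prod_ite_zero, prod_const, card_univ, mul_ite, mul_one, mul_zero]
    _ = ∑ A : Finset ι, signChar A a * ∑ z : ι → ℤˣ, signChar A z * signChar (π⁻¹ • A) z := by
        simp_rw [prod_one_add, powerset_univ, prod_mul_distrib]
        rw [sum_comm]
        simp_rw [signChar_perm_smul, mul_sum, signChar]
    _ = (2 : ℂ) ^ Fintype.card ι * ∑ A : Finset ι, if π • A = A then signChar A a else 0 := by
        simp_rw [sum_signChar_mul_signChar, eq_inv_smul_iff, mul_sum, mul_ite, mul_zero, mul_comm]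

end SignCharacters

lemma Finset.sum_eq_sum_range_sum_powersetCard {ι M : Type*} [Fintype ι] [DecidableEq ι]
    [AddCommMonoid M] (F : Finset ι → M) :
    ∑ A, F A = ∑ s ∈ range (Fintype.card ι + 1), ∑ A : Set.powersetCard ι s, F A := by
  rw [← sum_fiberwise_of_maps_to (g := card)
    fun A _ => mem_range.2 (Nat.lt_succ_of_le (card_le_univ A))]
  exact sum_congr rfl fun s _ => sum_subtype _ (fun A => by simp [Set.powersetCard.mem_iff]) F

lemma LinearMap.trace_eq_sum_apply_single {R ι : Type*} [CommRing R] [Fintype ι] [DecidableEq ι]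
    (f : (ι → R) →ₗ[R] ι → R) : LinearMap.trace R _ f = ∑ i, f (Pi.single i 1) i := by
  rw [← Matrix.toLin'_toMatrix' f, Matrix.trace_toLin'_eq, Matrix.toLin'_toMatrix']
  rfl

theorem Representation.IsIrreducible.of_forall_ne_bot {k G V : Type*} [Field k] [Monoid G]
    [AddCommGroup V] [Module k V] [Nontrivial V] {ρ : Representation k G V}
    (h : ∀ W : Subrepresentation ρ, W ≠ ⊥ → W = ⊤) : ρ.IsIrreducible where
  exists_pair_ne := ⟨⊥, ⊤, fun hbt => bot_ne_top (congrArg Subrepresentation.toSubmodule hbt)⟩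
  eq_bot_or_eq_top W := or_iff_not_imp_left.2 (h W)

open CategoryTheory in
theorem FDRep.simple_of_isIrreducible {k G : Type} [Field k] [Monoid G] (V : FDRep k G)
    [Representation.IsIrreducible V.ρ] : Simple V := by
  have : Simple ((forget₂ (FDRep k G) (Rep k G)).obj V) := by
    rw [← simple_obj_iff Rep.toModuleMonoidAlgebra]
    exact simple_iff_isSimpleModule.2
      ((Representation.irreducible_iff_isSimpleModule_asModule V.ρ).1 inferInstance)
  exact Functor.simple_of_simple_obj (forget₂ (FDRep k G) (Rep k G)) V

namespace SemidirectProduct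

variable {N K : Type*} [Group N] [Group K] {φ : K →* MulAut N}

lemma sum_ite_eq_inr [Fintype K] (η : K → ℂ) (y : N ⋊[φ] K) :
    ∑ k : K, (if y = inr k then η k else 0) = if y.left = 1 then η y.right else 0 := by
  by_cases hy : y.left = 1
  · have hk (k : K) : y = inr k ↔ y.right = k := by
      rw [SemidirectProduct.ext_iff, left_inr, right_inr, and_iff_right hy]
    simp_rw [hk, sum_ite_eq, mem_univ, if_true, if_pos hy]
  · rw [if_neg hy]
    exact sum_eq_zero fun k _ => if_neg fun h : y = inr k => hy (h ▸ left_inr k)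

lemma conj_right (g x : N ⋊[φ] K) : (x⁻¹ * g * x).right = x.right⁻¹ * g.right * x.right := by
  simp [mul_right, inv_right]

lemma conj_left_eq_one_iff (g x : N ⋊[φ] K) :
    (x⁻¹ * g * x).left = 1 ↔ ((inl x.left)⁻¹ * g * inl x.left).left = 1 := by
  have hconj : x⁻¹ * g * x = inr x.right⁻¹ * ((inl x.left)⁻¹ * g * inl x.left) * inr x.right := by
    conv_lhs => rw [← inl_left_mul_inr_right x]
    rw [map_inv]
    group
  rw [hconj]
  simp only [mul_left, left_inr, right_inr, map_one, one_mul, mul_one, MulEquiv.map_eq_one_iff]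

/-- Writing `x = inl n * inr k`, conjugating by `inr k` changes neither whether `x⁻¹ * g * x`
lies in `K` nor, `η` being a class function, the value of `η` there. -/
theorem inducedCharOf_inr_apply [Fintype N] [Fintype K] [Fintype (N ⋊[φ] K)] (η : K → ℂ)
    (hη : ∀ k k', η (k'⁻¹ * k * k') = η k) (g : N ⋊[φ] K) :
    inducedCharOf inr η g = η g.right * #{x : N | ((inl x)⁻¹ * g * inl x).left = 1} := by
  set F : N → ℂ := fun x => if ((inl x : N ⋊[φ] K)⁻¹ * g * inl x).left = 1 then η g.right else 0
    with hF
  have hsummand (x : N ⋊[φ] K) :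
      (if (x⁻¹ * g * x).left = 1 then η (x⁻¹ * g * x).right else 0) = F x.left := by
    rw [conj_right, hη]
    exact if_congr (conj_left_eq_one_iff g x) rfl rfl
  calc _
      = (Fintype.card K : ℂ)⁻¹ *
          ∑ x : N ⋊[φ] K, if (x⁻¹ * g * x).left = 1 then η (x⁻¹ * g * x).right else 0 := by
        unfold inducedCharOf
        congr 1
        -- `convert` reconciles the classical `Decidable` instance of `inducedCharOf` with the
        -- derived one in `sum_ite_eq_inr`
        exact sum_congr rfl fun x _ => by convert sum_ite_eq_inr η (x⁻¹ * g * x)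
    _ = (Fintype.card K : ℂ)⁻¹ * ∑ p : N × K, F p.1 := by
        simp_rw [hsummand]
        exact congrArg _ (Fintype.sum_equiv equivProd _ _ fun x => rfl)
    _ = ∑ x, F x := by
        rw [Fintype.sum_prod_type]
        simp only [sum_const, card_univ, nsmul_eq_mul]
        rw [← mul_sum, ← mul_assoc, inv_mul_cancel₀ (Nat.cast_ne_zero.2 Fintype.card_ne_zero),
          one_mul]
    _ = _ := by
        rw [natCast_card_filter, mul_sum]
        simp only [hF, mul_ite, mul_one, mul_zero]

end SemidirectProduct

namespace HyperW

open SemidirectProduct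

instance (n : ℕ) : MulAction (HyperW n) (Fin n) := MulAction.compHom _ rightHom

section Cocycle

variable {n : ℕ}

lemma smul_finset_def (g : HyperW n) (A : Finset (Fin n)) : g • A = g.right • A := rfl

lemma signChar_smul_permAut (π : Equiv.Perm (Fin n)) (A : Finset (Fin n)) (z : Fin n → ℤˣ) :
    signChar (π • A) (permAut n π z) = signChar A z := by
  rw [signChar_perm_smul]
  simp [permAut, signChar]

noncomputable def cocycle (g : HyperW n) (A : Finset (Fin n)) : ℂ :=
  ((Equiv.Perm.sign g.right : ℤ) : ℂ) * signChar (g • A) g.left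

lemma cocycle_mul (g h : HyperW n) (A : Finset (Fin n)) :
    cocycle (g * h) A = cocycle g (h • A) * cocycle h A := by
  simp only [cocycle, smul_finset_def, mul_smul, mul_right, mul_left, map_mul, signChar_mul,
    signChar_smul_permAut]
  push_cast
  ring

lemma cocycle_one (A : Finset (Fin n)) : cocycle 1 A = 1 := by
  simp [cocycle, signChar]

lemma cocycle_inl (z : Fin n → ℤˣ) (A : Finset (Fin n)) : cocycle (inl z) A = signChar A z := by
  simp [cocycle, smul_finset_def]

lemma cocycle_ne_zero (g : HyperW n) (A : Finset (Fin n)) : cocycle g A ≠ 0 :=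
  mul_ne_zero (by rcases Int.units_eq_one_or (Equiv.Perm.sign g.right) with h | h <;> simp [h])
    (signChar_ne_zero _ _)

end Cocycle

noncomputable def colRep (n s : ℕ) :
    Representation ℂ (HyperW n) (Set.powersetCard (Fin n) s → ℂ) where
  toFun g :=
    { toFun f B := cocycle g (g⁻¹ • B : Set.powersetCard (Fin n) s) * f (g⁻¹ • B)
      map_add' f₁ f₂ := by funext B; simp [mul_add]
      map_smul' c f := by funext B; simp [mul_left_comm] }
  map_one' := by ext f B; simp [cocycle_one]
  map_mul' g h := by
    ext f B
    simp [mul_inv_rev, mul_smul, cocycle_mul, mul_assoc]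

section ColRep

open Set

variable {n s : ℕ}

lemma colRep_apply (g : HyperW n) (f : powersetCard (Fin n) s → ℂ) (B : powersetCard (Fin n) s) :
    colRep n s g f B = cocycle g (g⁻¹ • B : powersetCard (Fin n) s) * f (g⁻¹ • B) := rfl

lemma colRep_single (g : HyperW n) (A : powersetCard (Fin n) s) (c : ℂ) :
    colRep n s g (Pi.single A c) = Pi.single (g • A) (cocycle g A * c) := by
  funext B
  rw [colRep_apply]
  obtain rfl | hB := eq_or_ne B (g • A)
  · simp
  · rw [Pi.single_eq_of_ne hB, Pi.single_eq_of_ne (by rwa [ne_eq, inv_smul_eq_iff]), mul_zero]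

lemma colRep_inl_apply (z : Fin n → ℤˣ) (f : powersetCard (Fin n) s → ℂ)
    (B : powersetCard (Fin n) s) :
    colRep n s (inl z) f B = signChar (B : Finset (Fin n)) z * f B := by
  have hB : (inl z : HyperW n)⁻¹ • B = B :=
    Subtype.ext (by simp [powersetCard.coe_smul, smul_finset_def])
  rw [colRep_apply, hB, cocycle_inl]

lemma character_colRep (g : HyperW n) :
    (FDRep.of (colRep n s)).character g =
      ∑ A : powersetCard (Fin n) s, if g • (A : Finset (Fin n)) = A then cocycle g A else 0 := by
  rw [FDRep.character, FDRep.of_ρ', LinearMap.trace_eq_sum_apply_single]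
  refine sum_congr rfl fun A _ => ?_
  rw [colRep_single, Pi.single_apply, mul_one]
  exact if_congr (by rw [eq_comm, Subtype.ext_iff, powersetCard.coe_smul]) rfl rfl

lemma sum_signChar_smul_colRep_inl (f : powersetCard (Fin n) s → ℂ) (A : powersetCard (Fin n) s) :
    ∑ z : Fin n → ℤˣ, signChar (A : Finset (Fin n)) z • colRep n s (inl z) f =
      Pi.single A ((2 : ℂ) ^ n * f A) := by
  funext B
  simp only [Finset.sum_apply, Pi.smul_apply, colRep_inl_apply, smul_eq_mul, ← mul_assoc,
    ← Finset.sum_mul, sum_signChar_mul_signChar, Fintype.card_fin, Subtype.val_inj,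
    Pi.single_apply]
  obtain rfl | hAB := eq_or_ne A B
  · simp
  · simp [hAB, hAB.symm]

lemma exists_single_mem_of_ne_bot (W : Subrepresentation (colRep n s)) (hW : W ≠ ⊥) :
    ∃ A, Pi.single A 1 ∈ W.toSubmodule := by
  have hW' : W.toSubmodule ≠ ⊥ := fun h => hW (Subrepresentation.toSubmodule_injective h)
  obtain ⟨f, hfW, hf⟩ := Submodule.exists_mem_ne_zero_of_ne_bot hW'
  obtain ⟨A, hA⟩ := Function.ne_iff.1 hf
  refine ⟨A, (W.toSubmodule.smul_mem_iff (mul_ne_zero (pow_ne_zero n two_ne_zero) hA)).1 ?_⟩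
  rw [← Pi.single_smul', smul_eq_mul, mul_one, ← sum_signChar_smul_colRep_inl]
  exact W.toSubmodule.sum_mem fun z _ => W.toSubmodule.smul_mem _ (W.apply_mem_toSubmodule _ hfW)

lemma single_mem_of_single_mem (W : Subrepresentation (colRep n s)) {A : powersetCard (Fin n) s}
    (hA : Pi.single A 1 ∈ W.toSubmodule) (B : powersetCard (Fin n) s) :
    Pi.single B 1 ∈ W.toSubmodule := by
  obtain ⟨π, hπ⟩ := powersetCard.isPretransitive.exists_smul_eq A B
  have hgA : (inr π : HyperW n) • A = B := hπ ▸ Subtype.ext rfl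
  have h := W.apply_mem_toSubmodule (inr π) hA
  rw [colRep_single, hgA, ← smul_eq_mul, Pi.single_smul'] at h
  exact (W.toSubmodule.smul_mem_iff (cocycle_ne_zero _ _)).1 h

theorem colRep_isIrreducible (hs : s ≤ n) : (colRep n s).IsIrreducible := by
  have : Nonempty (powersetCard (Fin n) s) := by
    rw [Set.nonempty_coe_sort, Set.nonempty_iff_ne_empty, ne_eq, powersetCard.eq_empty_iff]
    simpa using hs
  refine .of_forall_ne_bot fun W hW => ?_
  obtain ⟨A, hA⟩ := exists_single_mem_of_ne_bot W hW
  refine Subrepresentation.toSubmodule_injective (eq_top_iff.2 ?_)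
  rw [← (Pi.basisFun ℂ _).span_eq, Submodule.span_le]
  rintro _ ⟨B, rfl⟩
  simpa using single_mem_of_single_mem W hA B

lemma sum_character_colRep_inl_mul_signChar (B : Finset (Fin n)) :
    ∑ z : Fin n → ℤˣ, (FDRep.of (colRep n s)).character (inl z) * signChar B z =
      if B.card = s then 2 ^ n else 0 := by
  have hfix (z : Fin n → ℤˣ) (A : Finset (Fin n)) : (inl z : HyperW n) • A = A := by
    simp [smul_finset_def]
  simp only [character_colRep, hfix, if_true, cocycle_inl, Finset.sum_mul]
  rw [Finset.sum_comm]
  simp only [sum_signChar_mul_signChar, Fintype.card_fin]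
  by_cases hB : B.card = s
  · rw [Fintype.sum_eq_single ⟨B, hB⟩ fun A hA => if_neg (mt Subtype.ext hA), if_pos rfl, if_pos hB]
  · rw [if_neg hB]
    exact Finset.sum_eq_zero fun A _ => if_neg fun h : (A : Finset (Fin n)) = B => hB (h ▸ A.2)

theorem character_colRep_injOn :
    InjOn (fun s => (FDRep.of (colRep n s)).character) (Set.Iic n) := by
  intro s hs s' _ h
  obtain ⟨B, -, hB⟩ :=
    Finset.exists_subset_card_eq (show s ≤ #(univ : Finset (Fin n)) by simpa using hs)
  have hsum := sum_character_colRep_inl_mul_signChar (s := s) B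
  rw [show (FDRep.of (colRep n s)).character = (FDRep.of (colRep n s')).character from h,
    sum_character_colRep_inl_mul_signChar, if_pos hB] at hsum
  by_contra hne
  rw [if_neg (hB ▸ hne)] at hsum
  exact pow_ne_zero n two_ne_zero hsum.symm

end ColRep

variable {n : ℕ}

lemma inl_conj_left_eq_one_iff (g : HyperW n) (z : Fin n → ℤˣ) :
    ((inl z : HyperW n)⁻¹ * g * inl z).left = 1 ↔ ∀ i, g.left i = z i * z (g.right⁻¹ i) := by
  have hunits : ∀ a b c : ℤˣ, a⁻¹ * b * c = 1 ↔ b = a * c := by decide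
  simp only [mul_left, inv_left, left_inl, right_inl, inv_one, map_one, MulAut.one_apply,
    mul_right, funext_iff, Pi.mul_apply, Pi.inv_apply, Pi.one_apply, ← hunits]
  rfl

theorem inducedCharOf_sign_apply (g : HyperW n) :
    inducedCharOf (inr : Equiv.Perm (Fin n) →* HyperW n)
        (fun s => ((Equiv.Perm.sign s : ℤ) : ℂ)) g =
      ∑ A : Finset (Fin n), if g • A = A then cocycle g A else 0 := by
  have hsign (k k' : Equiv.Perm (Fin n)) : Equiv.Perm.sign (k'⁻¹ * k * k') = Equiv.Perm.sign k := by
    rw [map_mul, map_mul, map_inv, mul_comm, ← mul_assoc, mul_inv_cancel, one_mul]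
  rw [inducedCharOf_inr_apply _ (fun k k' => by rw [hsign]) g]
  calc _ = ((Equiv.Perm.sign g.right : ℤ) : ℂ) *
        ∑ A : Finset (Fin n), if g.right • A = A then signChar A g.left else 0 := by
        rw [← card_solutions_mul_comp_perm]
        congr 3
        ext z
        simp only [mem_filter, mem_univ, true_and, inl_conj_left_eq_one_iff]
    _ = _ := by
        simp only [mul_sum, mul_ite, mul_zero, cocycle, smul_finset_def]
        exact sum_congr rfl fun A _ => ite_congr rfl (fun h => by rw [h]) fun _ => rfl

end HyperW

/-- `Ind_{S_t}^{W_t} sgn` is the multiplicity-free sum of the distinct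
irreducible characters of `W_t` labeled by the bipartitions `([s]_col, [r]_col)`
over all pairs `(s, r)` with `s + r = t`. -/
theorem inducedChar_sgn_St_to_Wt (t : ℕ) :
    ∃ σ : ℕ × ℕ → (HyperW t → ℂ),
      Set.InjOn σ {p | p.1 + p.2 = t} ∧
      (∀ p : ℕ × ℕ, p.1 + p.2 = t → IsIrredChar (HyperW t) (σ p)) ∧
      inducedCharOf (SemidirectProduct.inr : Equiv.Perm (Fin t) →* HyperW t)
          (fun s => ((Equiv.Perm.sign s : ℤ) : ℂ)) =
        ∑ᶠ p ∈ {p : ℕ × ℕ | p.1 + p.2 = t}, σ p := by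
  refine ⟨fun p => (FDRep.of (HyperW.colRep t p.1)).character, ?_, fun p hp => ?_, ?_⟩
  · rintro p (hp : p.1 + p.2 = t) q (hq : q.1 + q.2 = t) hpq
    have h1 : p.1 = q.1 :=
      HyperW.character_colRep_injOn (show p.1 ≤ t by omega) (show q.1 ≤ t by omega) hpq
    exact Prod.ext h1 (by omega)
  · have : Representation.IsIrreducible (FDRep.of (HyperW.colRep t p.1)).ρ :=
      HyperW.colRep_isIrreducible (show p.1 ≤ t by omega)
    exact ⟨_, FDRep.simple_of_isIrreducible (FDRep.of (HyperW.colRep t p.1)), rfl⟩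
  · have hset : {p : ℕ × ℕ | p.1 + p.2 = t} = ↑(antidiagonal t) := by ext; simp
    rw [hset, finsum_mem_coe_finset, Nat.sum_antidiagonal_eq_sum_range_succ_mk]
    funext g
    rw [HyperW.inducedCharOf_sign_apply, sum_eq_sum_range_sum_powersetCard, Finset.sum_apply,
      Fintype.card_fin]
    simp only [HyperW.character_colRep]
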